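/- Let G be a minimal nonperfectly divisible fork-free graph, v ∈ V(G), and C = v_1v_2…v_nv_1 an odd hole contained in G[M(v)] (n ≥ 5 odd, indices modulo n). Then U'(C) is complete to U(C) ∪ V(C) ∪ Y'(C) ∪ Z(C). -/

import Mathlib

open SimpleGraph

/-- `G` contains an induced copy of `H`. -/
def HasInducedCopy {V W : Type*} (G : SimpleGraph V) (H : SimpleGraph W) : Prop :=
  ∃ f : W ↪ V, ∀ a b : W, G.Adj (f a) (f b) ↔ H.Adj a b

/-- The fork: the claw `K_{1,3}` with one edge subdivided once. -/
def fork : SimpleGraph (Fin 5) :=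
  SimpleGraph.fromEdgeSet {s(0, 1), s(0, 2), s(0, 3), s(3, 4)}

/-- The claw `K_{1,3}`. -/
def claw : SimpleGraph (Fin 4) :=
  SimpleGraph.fromEdgeSet {s(0, 1), s(0, 2), s(0, 3)}

/-- The path on 7 vertices. -/
def P7 : SimpleGraph (Fin 7) := SimpleGraph.pathGraph 7

/-- The disjoint union of a path on 6 vertices and a single vertex. -/
def P6K1 : SimpleGraph (Fin 7) :=
  SimpleGraph.fromEdgeSet {s(0, 1), s(1, 2), s(2, 3), s(3, 4), s(4, 5)}

/-- A graph is perfect if every induced subgraph has chromatic number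
equal to clique number. -/
def IsPerfect {V : Type*} (G : SimpleGraph V) : Prop :=
  ∀ s : Set V, (G.induce s).chromaticNumber = ((G.induce s).cliqueNum : ℕ∞)

/-- A graph is perfectly divisible if the vertex set of every (nonempty) induced
subgraph `H` can be partitioned into `A` and `B` with `H[A]` perfect and
`ω(H[B]) < ω(H)`. -/
def PerfectlyDivisible {V : Type*} (G : SimpleGraph V) : Prop :=
  ∀ s : Set V, s.Nonempty → ∃ A B : Set V, A ∪ B = s ∧ A ∩ B = ∅ ∧
    IsPerfect (G.induce A) ∧ (G.induce B).cliqueNum < (G.induce s).cliqueNum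

/-- A graph is minimal nonperfectly divisible if it is not perfectly divisible but
every proper induced subgraph is perfectly divisible. -/
def MinimalNPD {V : Type*} (G : SimpleGraph V) : Prop :=
  ¬ PerfectlyDivisible G ∧ ∀ s : Set V, s ≠ Set.univ → PerfectlyDivisible (G.induce s)

/-- The open neighborhood of a set `S`: all vertices outside `S` with a neighbor in `S`. -/
def NSet {V : Type*} (G : SimpleGraph V) (S : Set V) : Set V :=
  {v | v ∉ S ∧ ∃ x ∈ S, G.Adj x v}

/-- `M(S)`: the vertices outside `S ∪ N(S)`. -/
def MSet {V : Type*} (G : SimpleGraph V) (S : Set V) : Set V :=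
  {v | v ∉ S ∧ v ∉ NSet G S}

/-- `M(v)`: the set of vertices distinct from `v` and nonadjacent to `v`. -/
def Mv {V : Type*} (G : SimpleGraph V) (v : V) : Set V :=
  {u | u ≠ v ∧ ¬ G.Adj v u}

/-- `f : ZMod n → V` describes a hole (an induced cycle of length at least 4) of `G`. -/
def IsHole {V : Type*} (G : SimpleGraph V) (n : ℕ) (f : ZMod n → V) : Prop :=
  4 ≤ n ∧ Function.Injective f ∧
    ∀ i j : ZMod n, G.Adj (f i) (f j) ↔ (j = i + 1 ∨ i = j + 1)

/-- `U(C)`: the balloon centers of the hole `C` given by `f`. -/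
def USet {V : Type*} (G : SimpleGraph V) (n : ℕ) (f : ZMod n → V) : Set V :=
  {u | u ∈ NSet G (MSet G (Set.range f)) ∧
    ∃ i : ZMod n, G.neighborSet u ∩ Set.range f = {f i, f (i + 1)}}

/-- `U_i(C)`: the balloon centers of `C` attached at `v_i v_{i+1}`. -/
def UiSet {V : Type*} (G : SimpleGraph V) (n : ℕ) (f : ZMod n → V) (i : ZMod n) : Set V :=
  {u | u ∈ NSet G (MSet G (Set.range f)) ∧
    G.neighborSet u ∩ Set.range f = {f i, f (i + 1)}}

/-- `U'(C)`: the parachute centers of `C`. -/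
def U'Set {V : Type*} (G : SimpleGraph V) (n : ℕ) (f : ZMod n → V) : Set V :=
  {u | u ∈ NSet G (MSet G (Set.range f)) ∧ ∀ i : ZMod n, G.Adj u (f i)}

/-- `Z(C)`: vertices of `N(V(C)) \ N(M(C))` not complete to `V(C)`. -/
def ZSet {V : Type*} (G : SimpleGraph V) (n : ℕ) (f : ZMod n → V) : Set V :=
  {z | z ∈ NSet G (Set.range f) ∧ z ∉ NSet G (MSet G (Set.range f)) ∧
    ¬ ∀ i : ZMod n, G.Adj z (f i)}

/-- `Z'(C) = N(V(C)) \ (N(M(C)) ∪ Z(C))`. -/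
def Z'Set {V : Type*} (G : SimpleGraph V) (n : ℕ) (f : ZMod n → V) : Set V :=
  NSet G (Set.range f) \ (NSet G (MSet G (Set.range f)) ∪ ZSet G n f)

/-- `Y(C) = N_{M(C)}(U(C))`. -/
def YSet {V : Type*} (G : SimpleGraph V) (n : ℕ) (f : ZMod n → V) : Set V :=
  {y | y ∈ MSet G (Set.range f) ∧ ∃ u ∈ USet G n f, G.Adj u y}

/-- `x` and `y` lie in a common connected component of `G[S]`. -/
def SameComp {V : Type*} (G : SimpleGraph V) (S : Set V) (x y : V) : Prop :=
  ∃ (hx : x ∈ S) (hy : y ∈ S), (G.induce S).Reachable ⟨x, hx⟩ ⟨y, hy⟩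

/-- `Y'(C)`: the union of the components of `G[M(C)]` meeting `Y(C)`. -/
def Y'Set {V : Type*} (G : SimpleGraph V) (n : ℕ) (f : ZMod n → V) : Set V :=
  {x | ∃ y ∈ YSet G n f, SameComp G (MSet G (Set.range f)) x y}

/-!
A vertex `u' ∈ U'(C)` is complete to `C` and has a neighbour `m'` in `M(C)`. In a fork-free
graph, a vertex `a` complete to two distinct nonadjacent vertices `p, q` is also adjacent to `y`
whenever `a x y` is a path with `x, y` anticomplete to `{p, q}`: otherwise `a; p, q, x - y` is a
fork. For `u ∈ U_i(C)` and for `Y'(C)` take `{p, q} = {v_{i+2}, v_{i-1}}`, which sees neither `u`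
nor `M(C)`. A vertex `x` of `U_i(C)` or `Z(C)` that misses `m'` has a neighbour `v_a` and a
nonneighbour `v_c` with `a, c` not consecutive; then take `{p, q} = {m', v_c}` and the path
`u' v_a x`.
-/

theorem ZMod.natCast_ne_zero_of_pos_of_lt {n k : ℕ} (hk : 0 < k) (hkn : k < n) :
    (k : ZMod n) ≠ 0 := by
  rw [Ne, ZMod.natCast_eq_zero_iff]
  exact fun h => absurd (Nat.le_of_dvd hk h) (by omega)

section SmallOffsets

variable {n : ℕ} (hn : 5 ≤ n) (i : ZMod n)
include hn

theorem ZMod.sub_one_ne_self : i - 1 ≠ i := fun e =>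
  natCast_ne_zero_of_pos_of_lt (n := n) (k := 1) one_pos (by omega)
    (by push_cast; linear_combination -e)

theorem ZMod.sub_one_ne_add_one : i - 1 ≠ i + 1 := fun e =>
  natCast_ne_zero_of_pos_of_lt (n := n) (k := 2) two_pos (by omega)
    (by push_cast; linear_combination -e)

theorem ZMod.add_two_ne_self : i + 2 ≠ i := fun e =>
  natCast_ne_zero_of_pos_of_lt (n := n) (k := 2) two_pos (by omega)
    (by push_cast; linear_combination e)

theorem ZMod.add_two_ne_add_one : i + 2 ≠ i + 1 := fun e =>
  natCast_ne_zero_of_pos_of_lt (n := n) (k := 1) one_pos (by omega)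
    (by push_cast; linear_combination e)

theorem ZMod.add_two_ne_sub_one : i + 2 ≠ i - 1 := fun e =>
  natCast_ne_zero_of_pos_of_lt (n := n) (k := 3) three_pos (by omega)
    (by push_cast; linear_combination e)

theorem ZMod.self_ne_add_two_add_one : i ≠ i + 2 + 1 := fun e =>
  natCast_ne_zero_of_pos_of_lt (n := n) (k := 3) three_pos (by omega)
    (by push_cast; linear_combination -e)

theorem ZMod.sub_one_ne_add_two_add_one : i - 1 ≠ i + 2 + 1 := fun e =>
  natCast_ne_zero_of_pos_of_lt (n := n) (k := 4) four_pos (by omega)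
    (by push_cast; linear_combination -e)

end SmallOffsets

theorem ZMod.exists_not_consecutive {n : ℕ} (hn : 5 ≤ n) {P : ZMod n → Prop}
    (ha : ∃ a, P a) (hc : ∃ c, ¬ P c) :
    ∃ a c, P a ∧ ¬ P c ∧ a ≠ c + 1 ∧ c ≠ a + 1 := by
  have small : ∀ k : ℕ, 0 < k → k ≤ 4 → (k : ZMod n) ≠ 0 := fun k hk hk4 =>
    natCast_ne_zero_of_pos_of_lt hk (by omega)
  obtain ⟨a, ha⟩ := ha
  obtain ⟨c, hc⟩ := hc
  by_contra! H
  -- `a` pairs with `a ± 2` unless both lie in `P`; then `c = a ± 1` pairs with `a ∓ 2`.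
  have hP₂ : P (a + 2) := by
    by_contra h
    exact add_two_ne_add_one hn a (H a _ ha h (self_ne_add_two_add_one hn a))
  have hPm₂ : P (a - 2) := by
    by_contra h
    have := H a _ ha h fun e => small 1 one_pos (by norm_num) (by push_cast; linear_combination e)
    exact small 3 three_pos (by norm_num) (by push_cast; linear_combination -this)
  by_cases hac : a = c + 1
  · have := H _ c hP₂ hc fun e =>
      small 2 two_pos (by norm_num) (by push_cast; linear_combination e - hac)
    exact small 4 four_pos le_rfl (by push_cast; linear_combination -this - hac)
  · have hca := H a c ha hc hac
    have := H _ c hPm₂ hc fun e =>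
      small 4 four_pos le_rfl (by push_cast; linear_combination -e - hca)
    exact small 2 two_pos (by norm_num) (by push_cast; linear_combination this - hca)

section ForkFree

variable {V : Type*} {G : SimpleGraph V}

theorem adj_of_forkFree (hfork : ¬ HasInducedCopy G fork) {a p q x y : V}
    (hap : G.Adj a p) (haq : G.Adj a q) (hax : G.Adj a x) (hxy : G.Adj x y)
    (hpq : ¬ G.Adj p q) (hpx : ¬ G.Adj p x) (hqx : ¬ G.Adj q x)
    (hpy : ¬ G.Adj p y) (hqy : ¬ G.Adj q y) (hpq' : p ≠ q) (hay : a ≠ y) : G.Adj a y := by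
  by_contra hay'
  have := hap.ne; have := haq.ne; have := hax.ne; have := hxy.ne
  have : p ≠ x := fun h => hpy (h ▸ hxy)
  have : q ≠ x := fun h => hqy (h ▸ hxy)
  have : p ≠ y := fun h => hay' (h ▸ hap)
  have : q ≠ y := fun h => hay' (h ▸ haq)
  refine hfork ⟨⟨![a, p, q, x, y], fun i j h => ?_⟩, fun i j => ?_⟩
  · fin_cases i <;> fin_cases j <;> simp_all [eq_comm]
  · show G.Adj (![a, p, q, x, y] i) (![a, p, q, x, y] j) ↔ fork.Adj i j
    fin_cases i <;> fin_cases j <;> simp [fork, G.adj_comm, *]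

theorem adj_of_sameComp_of_forkFree (hfork : ¬ HasInducedCopy G fork) {a p q : V} {S : Set V}
    (hap : G.Adj a p) (haq : G.Adj a q) (hpq : ¬ G.Adj p q) (hpq' : p ≠ q)
    (hpS : ∀ s ∈ S, ¬ G.Adj p s) (hqS : ∀ s ∈ S, ¬ G.Adj q s) (haS : a ∉ S) {x y : V}
    (hxy : SameComp G S x y) (hax : G.Adj a x) : G.Adj a y := by
  obtain ⟨hx, hy, ⟨w⟩⟩ := hxy
  suffices ∀ {b c : S}, (G.induce S).Walk b c → G.Adj a b → G.Adj a c from this w hax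
  intro b c w
  induction w with
  | nil => exact id
  | @cons b c _ hbc _ ih =>
    exact fun hab => ih <| adj_of_forkFree hfork hap haq hab hbc hpq (hpS _ b.2) (hqS _ b.2)
      (hpS _ c.2) (hqS _ c.2) hpq' fun h => haS (h ▸ c.2)

end ForkFree

section Hole

variable {V : Type*} {G : SimpleGraph V} {n : ℕ} {f : ZMod n → V}

theorem not_adj_of_mem_MSet {S : Set V} {m s : V} (hm : m ∈ MSet G S) (hs : s ∈ S) :
    ¬ G.Adj s m :=
  fun h => hm.2 ⟨hm.1, s, hs, h⟩

theorem IsHole.not_adj (hC : IsHole G n f) {i j : ZMod n} (h₁ : j ≠ i + 1)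
    (h₂ : i ≠ j + 1) : ¬ G.Adj (f i) (f j) :=
  fun h => ((hC.2.2 i j).1 h).elim h₁ h₂

theorem adj_apply_of_mem_UiSet {i : ZMod n} {u : V} (hu : u ∈ UiSet G n f i) : G.Adj (f i) u :=
  (hu.2.superset (Set.mem_insert _ _)).1.symm

theorem not_adj_of_mem_UiSet (hC : IsHole G n f) {i j : ZMod n} {u : V}
    (hu : u ∈ UiSet G n f i) (h₁ : j ≠ i) (h₂ : j ≠ i + 1) : ¬ G.Adj (f j) u := by
  intro h
  have : f j ∈ G.neighborSet u ∩ Set.range f := ⟨h.symm, j, rfl⟩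
  rw [hu.2] at this
  exact this.elim (fun e => h₁ (hC.2.1 e)) fun e => h₂ (hC.2.1 e)

variable (hn : 5 ≤ n) (i : ZMod n)
include hn

theorem IsHole.not_adj_add_two_sub_one (hC : IsHole G n f) :
    ¬ G.Adj (f (i + 2)) (f (i - 1)) :=
  hC.not_adj (ZMod.sub_one_ne_add_two_add_one hn i)
    (by rw [sub_add_cancel]; exact ZMod.add_two_ne_self hn i)

theorem not_adj_add_two_of_mem_UiSet (hC : IsHole G n f) {u : V} (hu : u ∈ UiSet G n f i) :
    ¬ G.Adj (f (i + 2)) u :=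
  not_adj_of_mem_UiSet hC hu (ZMod.add_two_ne_self hn i) (ZMod.add_two_ne_add_one hn i)

theorem not_adj_sub_one_of_mem_UiSet (hC : IsHole G n f) {u : V} (hu : u ∈ UiSet G n f i) :
    ¬ G.Adj (f (i - 1)) u :=
  not_adj_of_mem_UiSet hC hu (ZMod.sub_one_ne_self hn i) (ZMod.sub_one_ne_add_one hn i)

end Hole

section ParachuteCenter

variable {V : Type*} {G : SimpleGraph V} {n : ℕ} {f : ZMod n → V}
  (hfork : ¬ HasInducedCopy G fork) (hC : IsHole G n f) {u' : V}
include hfork hC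

theorem adj_of_mixed_on_hole (hu' : ∀ i, G.Adj u' (f i)) {m : V}
    (hm : m ∈ MSet G (Set.range f)) (hmu' : G.Adj u' m) {x : V} (hmx : ¬ G.Adj m x)
    {a c : ZMod n} (hax : G.Adj (f a) x) (hcx : ¬ G.Adj (f c) x) (h₁ : a ≠ c + 1)
    (h₂ : c ≠ a + 1) : G.Adj u' x :=
  adj_of_forkFree hfork hmu' (hu' c) (hu' a) hax
    (fun h => not_adj_of_mem_MSet hm ⟨c, rfl⟩ h.symm)
    (fun h => not_adj_of_mem_MSet hm ⟨a, rfl⟩ h.symm) (hC.not_adj h₁ h₂) hmx hcx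
    (fun e => hm.1 ⟨c, e.symm⟩) fun e => hcx (e ▸ (hu' c).symm)

variable (hn : 5 ≤ n)
include hn

theorem U'Set.adj_of_mem_UiSet (hu' : u' ∈ U'Set G n f) {i : ZMod n} {u : V}
    (hu : u ∈ UiSet G n f i) : G.Adj u' u := by
  obtain ⟨⟨-, m, hm, hmu'⟩, hu'C⟩ := hu'
  have hu₂ := not_adj_add_two_of_mem_UiSet hn i hC hu
  by_cases hmu : G.Adj m u
  · exact adj_of_forkFree hfork (hu'C _) (hu'C _) hmu'.symm hmu
      (hC.not_adj_add_two_sub_one hn i) (not_adj_of_mem_MSet hm ⟨_, rfl⟩)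
      (not_adj_of_mem_MSet hm ⟨_, rfl⟩) hu₂ (not_adj_sub_one_of_mem_UiSet hn i hC hu)
      (hC.2.1.ne (ZMod.add_two_ne_sub_one hn i)) fun e => hu₂ (e ▸ (hu'C _).symm)
  · exact adj_of_mixed_on_hole hfork hC hu'C hm hmu'.symm hmu (adj_apply_of_mem_UiSet hu) hu₂
      (ZMod.self_ne_add_two_add_one hn i) (ZMod.add_two_ne_add_one hn i)

theorem U'Set.adj_of_mem_Y'Set (hu' : u' ∈ U'Set G n f) {x : V} (hx : x ∈ Y'Set G n f) :
    G.Adj u' x := by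
  obtain ⟨y, ⟨hyM, u, ⟨huN, i, hui⟩, huy⟩, hx, hy, hxy⟩ := hx
  have hu : u ∈ UiSet G n f i := ⟨huN, hui⟩
  have hpq := hC.not_adj_add_two_sub_one hn i
  have hpq' := hC.2.1.ne (ZMod.add_two_ne_sub_one hn i)
  have hpM : ∀ s ∈ MSet G (Set.range f), ¬ G.Adj (f (i + 2)) s :=
    fun s hs => not_adj_of_mem_MSet hs ⟨_, rfl⟩
  have hqM : ∀ s ∈ MSet G (Set.range f), ¬ G.Adj (f (i - 1)) s :=
    fun s hs => not_adj_of_mem_MSet hs ⟨_, rfl⟩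
  have hu'M : u' ∉ MSet G (Set.range f) := hu'.1.1
  have hu'y : G.Adj u' y := adj_of_forkFree hfork (hu'.2 _) (hu'.2 _)
    (U'Set.adj_of_mem_UiSet hfork hC hn hu' hu) huy hpq
    (not_adj_add_two_of_mem_UiSet hn i hC hu) (not_adj_sub_one_of_mem_UiSet hn i hC hu)
    (hpM y hyM) (hqM y hyM) hpq' fun e => hu'M (e ▸ hyM)
  exact adj_of_sameComp_of_forkFree hfork (hu'.2 _) (hu'.2 _) hpq hpq' hpM hqM hu'M
    ⟨hy, hx, hxy.symm⟩ hu'y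

theorem U'Set.adj_of_mem_ZSet (hu' : u' ∈ U'Set G n f) {z : V} (hz : z ∈ ZSet G n f) :
    G.Adj u' z := by
  obtain ⟨⟨-, m, hm, hmu'⟩, hu'C⟩ := hu'
  obtain ⟨⟨hzC, hNz⟩, hzM, hz⟩ := hz
  push Not at hz
  obtain ⟨a, c, hax, hcx, h₁, h₂⟩ := ZMod.exists_not_consecutive hn
    (P := fun j => G.Adj (f j) z) (Set.exists_range_iff.1 hNz) (by simpa [G.adj_comm] using hz)
  have hmz : ¬ G.Adj m z := fun hmz =>
    hzM ⟨fun hzMC => hzMC.2 ⟨hzC, _, ⟨a, rfl⟩, hax⟩, m, hm, hmz⟩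
  exact adj_of_mixed_on_hole hfork hC hu'C hm hmu'.symm hmz hax hcx h₁ h₂

end ParachuteCenter

theorem stmt17_general {V : Type*} (G : SimpleGraph V)
    (hfork : ¬ HasInducedCopy G fork)
    (n : ℕ) (f : ZMod n → V) (hC : IsHole G n f)
    (hn : 5 ≤ n) :
    ∀ u' ∈ U'Set G n f,
      ∀ x ∈ USet G n f ∪ Set.range f ∪ Y'Set G n f ∪ ZSet G n f,
        G.Adj u' x := by
  rintro u' hu' x (((⟨hxN, i, hxi⟩ | ⟨i, rfl⟩) | hx) | hx)
  · exact U'Set.adj_of_mem_UiSet hfork hC hn hu' ⟨hxN, hxi⟩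
  · exact hu'.2 i
  · exact U'Set.adj_of_mem_Y'Set hfork hC hn hu' hx
  · exact U'Set.adj_of_mem_ZSet hfork hC hn hu' hx

theorem stmt17 {V : Type*} [Fintype V] (G : SimpleGraph V)
    (hfork : ¬ HasInducedCopy G fork) (hmin : MinimalNPD G)
    (v : V) (n : ℕ) (f : ZMod n → V) (hC : IsHole G n f) (hodd : Odd n)
    (hn : 5 ≤ n) (hMv : Set.range f ⊆ Mv G v) :
    ∀ u' ∈ U'Set G n f,
      ∀ x ∈ USet G n f ∪ Set.range f ∪ Y'Set G n f ∪ ZSet G n f,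
        G.Adj u' x :=
  stmt17_general G hfork n f hC hn
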